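/- arXiv:1911.10993 — 8 statements merged into one kernel-verified Lean document; each statement's English description precedes it below -/
import Mathlib

section
/- Let (K, d) be a compact metric space, let γ = (γ₁, …, γₙ) be a system of proper contractions on K, and let p₁, …, pₙ be real numbers with pᵢ > 0 for every i and Σ_{i=1}^n pᵢ = 1. Then there exists a unique Borel probability measure μ on K such that μ(E) = Σ_{i=1}^n pᵢ · μ(γᵢ⁻¹(E)) for every Borel set E ⊆ K. -/
open MeasureTheory Set

/-- A continuous map `g : K → K` on a metric space is a *proper contraction* if there are
constants `0 < c₁ ≤ c₂ < 1` with `c₁ d(x,y) ≤ d(g x, g y) ≤ c₂ d(x,y)` for all `x, y`. -/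
def ProperContraction {K : Type*} [MetricSpace K] (g : K → K) : Prop :=
  ∃ c₁ c₂ : ℝ, 0 < c₁ ∧ c₁ ≤ c₂ ∧ c₂ < 1 ∧
    ∀ x y : K, c₁ * dist x y ≤ dist (g x) (g y) ∧ dist (g x) (g y) ≤ c₂ * dist x y

/-- `μ` is a self-similar (Borel probability) measure for the system `γ` with weights `p`. -/
def IsSelfSimilarMeasure {K : Type*} [MetricSpace K] [MeasurableSpace K] {n : ℕ}
    (γ : Fin n → K → K) (p : Fin n → ℝ) (μ : Measure K) : Prop :=
  IsProbabilityMeasure μ ∧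
    ∀ E : Set K, MeasurableSet E → μ E = ∑ i, ENNReal.ofReal (p i) * μ (γ i ⁻¹' E)

/-! The dual of the Hutchinson operator `T μ = ∑ pᵢ (γᵢ)₊ μ` is the Markov operator
`S f = ∑ pᵢ f ∘ γᵢ`. As the `γᵢ` contract distances by a factor `c < 1`, the oscillation of
`Sᵏ f` over `K` is controlled by the modulus of continuity of `f` at scale `cᵏ diam K`, so `Sᵏ f`
flattens to a constant. A probability measure fixed by `T` satisfies `∫ f dμ = ∫ Sᵏ f dμ`, hence
`∫ f dμ = lim Sᵏ f (x₀)`: this gives uniqueness. For existence, the probability measures on `K`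
form a compact space, and a cluster point of `Tᵏ δ_{x₀}` is fixed by `T` because the one-step
changes `Sᵏ⁺¹ f (x₀) - Sᵏ f (x₀)` tend to zero. -/

open Filter Topology
open scoped NNReal

theorem ProperContraction.exists_lipschitzWith {K : Type*} [MetricSpace K] {g : K → K}
    (hg : ProperContraction g) : ∃ c : ℝ≥0, c < 1 ∧ LipschitzWith c g := by
  obtain ⟨c₁, c₂, hc₁, hc₁₂, hc₂, h⟩ := hg
  exact ⟨⟨c₂, hc₁.le.trans hc₁₂⟩, hc₂, LipschitzWith.of_dist_le_mul fun x y => (h x y).2⟩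

theorem exists_lipschitzWith_lt_one {K ι : Type*} [PseudoEMetricSpace K] [Fintype ι]
    {g : ι → K → K} (hg : ∀ i, ∃ c : ℝ≥0, c < 1 ∧ LipschitzWith c (g i)) :
    ∃ c : ℝ≥0, c < 1 ∧ ∀ i, LipschitzWith c (g i) := by
  choose c hc hgc using hg
  exact ⟨Finset.univ.sup c, (Finset.sup_lt_iff zero_lt_one).2 fun i _ => hc i,
    fun i => (hgc i).weaken (Finset.le_sup (Finset.mem_univ i))⟩

theorem abs_sum_mul_le {ι : Type*} [Fintype ι] {p u : ι → ℝ} {ε : ℝ} (hp : ∀ i, 0 ≤ p i)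
    (hsum : ∑ i, p i = 1) (hu : ∀ i, |u i| ≤ ε) : |∑ i, p i * u i| ≤ ε :=
  calc |∑ i, p i * u i| ≤ ∑ i, p i * |u i| :=
        (Finset.abs_sum_le_sum_abs _ _).trans_eq
          (Finset.sum_congr rfl fun i _ => by rw [abs_mul, abs_of_nonneg (hp i)])
    _ ≤ ∑ i, p i * ε := Finset.sum_le_sum fun i _ => mul_le_mul_of_nonneg_left (hu i) (hp i)
    _ = ε := by rw [← Finset.sum_mul, hsum, one_mul]

theorem abs_integral_sub_le {Ω : Type*} [MeasurableSpace Ω] {μ : Measure Ω}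
    [IsProbabilityMeasure μ] {g : Ω → ℝ} (hg : Integrable g μ) {a ε : ℝ}
    (h : ∀ x, |g x - a| ≤ ε) : |∫ x, g x ∂μ - a| ≤ ε := by
  have := norm_integral_le_of_norm_le_const (μ := μ) (f := fun x => g x - a)
    (.of_forall fun x => by simpa only [Real.norm_eq_abs] using h x)
  rwa [Real.norm_eq_abs, integral_sub hg (integrable_const a), integral_const, probReal_univ,
    one_smul, mul_one] at this

theorem Continuous.integrable_of_compactSpace {Ω : Type*} [TopologicalSpace Ω] [CompactSpace Ω]
    [MeasurableSpace Ω] [OpensMeasurableSpace Ω] {μ : Measure Ω} [IsFiniteMeasure μ]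
    {f : Ω → ℝ} (hf : Continuous f) : Integrable f μ :=
  hf.integrable_of_hasCompactSupport (.of_compactSpace f)

theorem MapClusterPt.eq_of_tendsto {X α : Type*} [TopologicalSpace X] [T2Space X] {l : Filter α}
    {u : α → X} {x y : X} (hx : MapClusterPt x l u) (hy : Tendsto u l (𝓝 y)) : x = y :=
  eq_of_nhds_neBot (hx.clusterPt.mono hy)

section Hutchinson

variable {K ι : Type*} [Fintype ι] {γ : ι → K → K} {p : ι → ℝ}

variable (γ p) in
noncomputable def markovOperator (f : K → ℝ) (x : K) : ℝ :=
  ∑ i, p i * f (γ i x)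

variable (γ p) in
noncomputable def hutchinsonOperator [MeasurableSpace K] (μ : Measure K) : Measure K :=
  ∑ i, ENNReal.ofReal (p i) • μ.map (γ i)

theorem markovOperator_sub_markovOperator (f : K → ℝ) (x y : K) :
    markovOperator γ p f x - markovOperator γ p f y = ∑ i, p i * (f (γ i x) - f (γ i y)) := by
  simp only [markovOperator, mul_sub, Finset.sum_sub_distrib]

theorem markovOperator_sub_const (hsum : ∑ i, p i = 1) (f : K → ℝ) (x : K) (a : ℝ) :
    markovOperator γ p f x - a = ∑ i, p i * (f (γ i x) - a) := by
  simp only [markovOperator, mul_sub, Finset.sum_sub_distrib, ← Finset.sum_mul, hsum, one_mul]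

theorem continuous_markovOperator [TopologicalSpace K] (hγ : ∀ i, Continuous (γ i))
    {f : K → ℝ} (hf : Continuous f) : Continuous (markovOperator γ p f) :=
  continuous_finsetSum _ fun i _ => continuous_const.mul (hf.comp (hγ i))

theorem continuous_markovOperator_iterate [TopologicalSpace K] (hγ : ∀ i, Continuous (γ i))
    {f : K → ℝ} (hf : Continuous f) (k : ℕ) : Continuous ((markovOperator γ p)^[k] f) := by
  induction k with
  | zero => exact hf
  | succ k ih =>
    rw [Function.iterate_succ_apply']
    exact continuous_markovOperator hγ ih

section Oscillation

variable [PseudoMetricSpace K] {c : ℝ≥0}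

theorem abs_markovOperator_iterate_sub_le (hγ : ∀ i, LipschitzWith c (γ i))
    (hp : ∀ i, 0 ≤ p i) (hsum : ∑ i, p i = 1) {f : K → ℝ} {δ ε : ℝ}
    (hf : ∀ x y, dist x y < δ → |f x - f y| ≤ ε) (k : ℕ) {x y : K}
    (hxy : c ^ k * dist x y < δ) :
    |(markovOperator γ p)^[k] f x - (markovOperator γ p)^[k] f y| ≤ ε := by
  induction k generalizing x y with
  | zero => simpa using hf x y (by simpa using hxy)
  | succ k ih =>
    simp only [Function.iterate_succ_apply', markovOperator_sub_markovOperator]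
    refine abs_sum_mul_le hp hsum fun i => ih ?_
    calc (c : ℝ) ^ k * dist (γ i x) (γ i y) ≤ c ^ k * (c * dist x y) := by
          gcongr; exact (hγ i).dist_le_mul x y
      _ = c ^ (k + 1) * dist x y := by ring
      _ < δ := hxy

theorem eventually_abs_markovOperator_iterate_sub_le [CompactSpace K] (hc : c < 1)
    (hγ : ∀ i, LipschitzWith c (γ i)) (hp : ∀ i, 0 ≤ p i) (hsum : ∑ i, p i = 1)
    {f : K → ℝ} (hf : Continuous f) {ε : ℝ} (hε : 0 < ε) :
    ∀ᶠ k in atTop, ∀ x y,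
      |(markovOperator γ p)^[k] f x - (markovOperator γ p)^[k] f y| ≤ ε := by
  obtain ⟨δ, hδ, hfδ⟩ := Metric.uniformContinuous_iff.mp
    (CompactSpace.uniformContinuous_of_continuous hf) ε hε
  have hdiam : Tendsto (fun k => (c : ℝ) ^ k * Metric.diam (univ : Set K)) atTop (𝓝 0) := by
    simpa using (tendsto_pow_atTop_nhds_zero_of_lt_one c.2 hc).mul_const
      (Metric.diam (univ : Set K))
  filter_upwards [hdiam.eventually (gt_mem_nhds hδ)] with k hk x y
  refine abs_markovOperator_iterate_sub_le hγ hp hsum (fun x y h => (hfδ h).le) k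
    (lt_of_le_of_lt ?_ hk)
  gcongr
  exact Metric.dist_le_diam_of_mem isCompact_univ.isBounded (mem_univ x) (mem_univ y)

end Oscillation

section Measures

variable [MeasurableSpace K]

theorem hutchinsonOperator_apply (hγ : ∀ i, Measurable (γ i)) (μ : Measure K) {E : Set K}
    (hE : MeasurableSet E) :
    hutchinsonOperator γ p μ E = ∑ i, ENNReal.ofReal (p i) * μ (γ i ⁻¹' E) := by
  simp [hutchinsonOperator, Measure.map_apply (hγ _) hE]

theorem isProbabilityMeasure_hutchinsonOperator (hγ : ∀ i, Measurable (γ i))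
    (hp : ∀ i, 0 ≤ p i) (hsum : ∑ i, p i = 1) (μ : Measure K) [IsProbabilityMeasure μ] :
    IsProbabilityMeasure (hutchinsonOperator γ p μ) := by
  constructor
  simp [hutchinsonOperator_apply hγ μ .univ, ← ENNReal.ofReal_sum_of_nonneg fun i _ => hp i,
    hsum]

section Continuous

variable [TopologicalSpace K] [CompactSpace K] [BorelSpace K]

theorem integral_hutchinsonOperator (hγ : ∀ i, Continuous (γ i)) (hp : ∀ i, 0 ≤ p i)
    (μ : Measure K) [IsFiniteMeasure μ] {f : K → ℝ} (hf : Continuous f) :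
    ∫ x, f x ∂hutchinsonOperator γ p μ = ∫ x, markovOperator γ p f x ∂μ := by
  rw [hutchinsonOperator, integral_finsetSum_measure fun i _ =>
    (hf.integrable_of_compactSpace).smul_measure ENNReal.ofReal_ne_top]
  have hint : ∀ i ∈ Finset.univ, Integrable (fun x => p i * f (γ i x)) μ := fun i _ =>
    ((hf.comp (hγ i)).integrable_of_compactSpace).const_mul (p i)
  simp only [markovOperator]
  rw [integral_finsetSum _ hint]
  refine Finset.sum_congr rfl fun i _ => ?_
  rw [integral_smul_measure, ENNReal.toReal_ofReal (hp i), integral_const_mul,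
    integral_map (hγ i).aemeasurable hf.aestronglyMeasurable, smul_eq_mul]

theorem integral_hutchinsonOperator_iterate (hγ : ∀ i, Continuous (γ i)) (hp : ∀ i, 0 ≤ p i)
    (hsum : ∑ i, p i = 1) (μ : Measure K) [IsProbabilityMeasure μ] {f : K → ℝ}
    (hf : Continuous f) (k : ℕ) :
    ∫ x, f x ∂(hutchinsonOperator γ p)^[k] μ = ∫ x, (markovOperator γ p)^[k] f x ∂μ := by
  induction k generalizing μ with
  | zero => rfl
  | succ k ih =>
    have := isProbabilityMeasure_hutchinsonOperator (fun i => (hγ i).measurable) hp hsum μ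
    rw [Function.iterate_succ_apply, ih, integral_hutchinsonOperator hγ hp μ
      (continuous_markovOperator_iterate hγ hf k),
      ← Function.iterate_succ_apply' (markovOperator γ p)]

end Continuous

section Metric

variable [MetricSpace K] [CompactSpace K] [BorelSpace K] {c : ℝ≥0}

theorem tendsto_markovOperator_iterate_integral (hc : c < 1)
    (hγ : ∀ i, LipschitzWith c (γ i)) (hp : ∀ i, 0 ≤ p i) (hsum : ∑ i, p i = 1)
    {μ : Measure K} [IsProbabilityMeasure μ] (hμ : hutchinsonOperator γ p μ = μ) {f : K → ℝ}
    (hf : Continuous f) (x₀ : K) :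
    Tendsto (fun k => (markovOperator γ p)^[k] f x₀) atTop (𝓝 (∫ x, f x ∂μ)) := by
  have hγc : ∀ i, Continuous (γ i) := fun i => (hγ i).continuous
  refine Metric.tendsto_atTop.2 fun ε hε => ?_
  obtain ⟨k₀, hk₀⟩ := eventually_atTop.1
    (eventually_abs_markovOperator_iterate_sub_le hc hγ hp hsum hf (half_pos hε))
  refine ⟨k₀, fun k hk => ?_⟩
  rw [Real.dist_eq, abs_sub_comm, ← Function.iterate_fixed hμ k,
    integral_hutchinsonOperator_iterate hγc hp hsum μ hf k]
  have hint := (continuous_markovOperator_iterate (p := p) hγc hf k).integrable_of_compactSpace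
    (μ := μ)
  exact (abs_integral_sub_le hint fun x => hk₀ k hk x x₀).trans_lt (half_lt_self hε)

theorem hutchinsonOperator_fixed_unique (hc : c < 1) (hγ : ∀ i, LipschitzWith c (γ i))
    (hp : ∀ i, 0 ≤ p i) (hsum : ∑ i, p i = 1) {μ ν : Measure K} [IsProbabilityMeasure μ]
    [IsProbabilityMeasure ν] (hμ : hutchinsonOperator γ p μ = μ)
    (hν : hutchinsonOperator γ p ν = ν) : μ = ν := by
  obtain ⟨x₀⟩ := nonempty_of_isProbabilityMeasure μ
  refine ext_of_forall_integral_eq_of_IsFiniteMeasure fun f => tendsto_nhds_unique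
    (tendsto_markovOperator_iterate_integral hc hγ hp hsum hμ f.continuous x₀)
    (tendsto_markovOperator_iterate_integral hc hγ hp hsum hν f.continuous x₀)

theorem exists_hutchinsonOperator_fixed [Nonempty K] (hc : c < 1)
    (hγ : ∀ i, LipschitzWith c (γ i)) (hp : ∀ i, 0 ≤ p i) (hsum : ∑ i, p i = 1) :
    ∃ μ : Measure K, IsProbabilityMeasure μ ∧ hutchinsonOperator γ p μ = μ := by
  obtain ⟨x₀⟩ := ‹Nonempty K›
  have hγc : ∀ i, Continuous (γ i) := fun i => (hγ i).continuous
  have hprob :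
      ∀ k, IsProbabilityMeasure ((hutchinsonOperator γ p)^[k] (Measure.dirac x₀)) := by
    intro k
    induction k with
    | zero => exact inferInstanceAs (IsProbabilityMeasure (Measure.dirac x₀))
    | succ k ih =>
      rw [Function.iterate_succ_apply']
      exact isProbabilityMeasure_hutchinsonOperator (fun i => (hγc i).measurable) hp hsum _
  let u : ℕ → ProbabilityMeasure K := fun k => ⟨_, hprob k⟩
  have hu : ∀ k {g : K → ℝ}, Continuous g →
      ∫ x, g x ∂(u k : Measure K) = (markovOperator γ p)^[k] g x₀ := fun k g hg => by
    rw [ProbabilityMeasure.coe_mk, integral_hutchinsonOperator_iterate hγc hp hsum _ hg k,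
      integral_dirac]
  obtain ⟨μ, hμ⟩ := exists_clusterPt_of_compactSpace (map u atTop)
  have := isProbabilityMeasure_hutchinsonOperator (fun i => (hγc i).measurable) hp hsum
    (μ : Measure K)
  refine ⟨μ, inferInstance, ext_of_forall_integral_eq_of_IsFiniteMeasure fun f => ?_⟩
  have hSf : Continuous (markovOperator γ p f) := continuous_markovOperator hγc f.continuous
  let φ : ProbabilityMeasure K → ℝ := fun ν =>
    ∫ x, markovOperator γ p f x ∂(ν : Measure K) - ∫ x, f x ∂(ν : Measure K)
  have hφ : Continuous φ :=
    (ProbabilityMeasure.continuous_integral_boundedContinuousFunction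
      (.mkOfCompact ⟨_, hSf⟩)).sub
      (ProbabilityMeasure.continuous_integral_boundedContinuousFunction f)
  -- `φ (u k) = Sᵏ⁺¹ f (x₀) - Sᵏ f (x₀)` is bounded by the oscillation of `Sᵏ f`.
  have hφu : Tendsto (φ ∘ u) atTop (𝓝 0) := by
    refine Metric.tendsto_atTop.2 fun ε hε => ?_
    obtain ⟨k₀, hk₀⟩ := eventually_atTop.1
      (eventually_abs_markovOperator_iterate_sub_le hc hγ hp hsum f.continuous (half_pos hε))
    refine ⟨k₀, fun k hk => ?_⟩
    dsimp only [Function.comp_apply, φ]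
    rw [Real.dist_eq, sub_zero, hu k hSf, hu k f.continuous,
      ← Function.iterate_succ_apply, Function.iterate_succ_apply', markovOperator_sub_const hsum]
    exact (abs_sum_mul_le hp hsum fun i => hk₀ k hk _ _).trans_lt (half_lt_self hε)
  have hφμ : φ μ = 0 :=
    ((show MapClusterPt μ atTop u from hμ).tendsto_comp hφ.continuousAt).eq_of_tendsto hφu
  rw [integral_hutchinsonOperator hγc hp _ f.continuous]
  exact sub_eq_zero.1 hφμ

end Metric

end Measures

end Hutchinson

theorem isSelfSimilarMeasure_iff {K : Type*} [MetricSpace K] [MeasurableSpace K] {n : ℕ}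
    {γ : Fin n → K → K} {p : Fin n → ℝ} {μ : Measure K} (hγ : ∀ i, Measurable (γ i)) :
    IsSelfSimilarMeasure γ p μ ↔ IsProbabilityMeasure μ ∧ hutchinsonOperator γ p μ = μ := by
  rw [IsSelfSimilarMeasure, Measure.ext_iff]
  refine and_congr_right' (forall₂_congr fun E hE => ?_)
  rw [hutchinsonOperator_apply hγ μ hE, eq_comm]

theorem hutchinson_existence_uniqueness_general {K : Type*} [MetricSpace K] [CompactSpace K] [Nonempty K]
    [MeasurableSpace K] [BorelSpace K] {n : ℕ}
    (γ : Fin n → K → K) (hγ : ∀ i, ProperContraction (γ i))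
    (p : Fin n → ℝ) (hp : ∀ i, 0 < p i) (hsum : ∑ i, p i = 1) :
    ∃! μ : Measure K, IsSelfSimilarMeasure γ p μ := by
  obtain ⟨c, hc, hγc⟩ := exists_lipschitzWith_lt_one fun i => (hγ i).exists_lipschitzWith
  have hp₀ : ∀ i, 0 ≤ p i := fun i => (hp i).le
  simp only [isSelfSimilarMeasure_iff fun i => (hγc i).continuous.measurable]
  obtain ⟨μ, hμ, hTμ⟩ := exists_hutchinsonOperator_fixed hc hγc hp₀ hsum
  exact ⟨μ, ⟨hμ, hTμ⟩, fun ν ⟨_, hTν⟩ =>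
    hutchinsonOperator_fixed_unique hc hγc hp₀ hsum hTν hTμ⟩

/-- Hutchinson's theorem: given a system of proper contractions on a (nonempty) compact metric
space and weights `p` with `pᵢ > 0` and `∑ pᵢ = 1`, there is a unique Borel probability measure
`μ` with `μ(E) = ∑ pᵢ μ(γᵢ⁻¹ E)` for all Borel sets `E`. -/
theorem hutchinson_existence_uniqueness {K : Type*} [MetricSpace K] [CompactSpace K] [Nonempty K]
    [MeasurableSpace K] [BorelSpace K] {n : ℕ} (hn : 1 ≤ n)
    (γ : Fin n → K → K) (hγ : ∀ i, ProperContraction (γ i))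
    (p : Fin n → ℝ) (hp : ∀ i, 0 < p i) (hsum : ∑ i, p i = 1) :
    ∃! μ : Measure K, IsSelfSimilarMeasure γ p μ :=
  hutchinson_existence_uniqueness_general γ hγ p hp hsum
end

section
/- Let (K, d) be a compact metric space and let γ = (γ₁, …, γₙ) be a system of proper contractions on K. Assume that K is self-similar with respect to γ and that γ satisfies the measure separation condition in K. Then for every Borel set E ⊆ K and every i = 1, …, n, the Hutchinson measure satisfies μ^H(γᵢ(E)) = (1/n)·μ^H(E). -/
open MeasureTheory Set Filter Topology
open scoped ENNReal NNReal

noncomputable section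

/-- `K` is self-similar with respect to the system `γ`: `K = ⋃ i, γ i (K)`. -/
def SelfSimilarSet {K : Type*} [MetricSpace K] {n : ℕ} (γ : Fin n → K → K) : Prop :=
  (⋃ i, γ i '' Set.univ) = Set.univ

/-- `μ` is the Hutchinson measure of the system `γ`: the self-similar probability measure
with all weights equal to `1/n`. -/
def IsHutchinsonMeasure {K : Type*} [MetricSpace K] [MeasurableSpace K] {n : ℕ}
    (γ : Fin n → K → K) (μ : Measure K) : Prop :=
  IsProbabilityMeasure μ ∧
    ∀ E : Set K, MeasurableSet E → μ E = (n : ℝ≥0∞)⁻¹ * ∑ i, μ (γ i ⁻¹' E)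

/-- The system `γ` satisfies the measure separation condition: every self-similar measure gives
measure zero to `γ i (K) ∩ γ j (K)` for `i ≠ j`. -/
def MeasureSeparation {K : Type*} [MetricSpace K] [MeasurableSpace K] {n : ℕ}
    (γ : Fin n → K → K) : Prop :=
  ∀ p : Fin n → ℝ, (∀ i, 0 < p i) → (∑ i, p i) = 1 →
    ∀ μ : Measure K, IsSelfSimilarMeasure γ p μ →
      ∀ i j : Fin n, i ≠ j → μ (γ i '' Set.univ ∩ γ j '' Set.univ) = 0

namespace ProperContraction

variable {K : Type*} [MetricSpace K] {g : K → K}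

theorem lipschitzWith (hg : ProperContraction g) : ∃ c : ℝ≥0, LipschitzWith c g := by
  obtain ⟨_, c₂, -, -, -, h⟩ := hg
  exact ⟨c₂.toNNReal, .of_dist_le_mul fun x y =>
    (h x y).2.trans (by gcongr; exact Real.le_coe_toNNReal c₂)⟩

theorem antilipschitzWith (hg : ProperContraction g) : ∃ c : ℝ≥0, AntilipschitzWith c g := by
  obtain ⟨c₁, _, hc₁, -, -, h⟩ := hg
  refine ⟨c₁⁻¹.toNNReal, .of_le_mul_dist fun x y => ?_⟩
  rw [Real.coe_toNNReal _ (inv_nonneg.2 hc₁.le), ← div_eq_inv_mul, le_div_iff₀' hc₁]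
  exact (h x y).1

theorem isClosedEmbedding [CompleteSpace K] (hg : ProperContraction g) :
    Topology.IsClosedEmbedding g := by
  obtain ⟨_, hlip⟩ := hg.lipschitzWith
  obtain ⟨_, hanti⟩ := hg.antilipschitzWith
  exact hanti.isClosedEmbedding hlip.uniformContinuous

theorem measurableEmbedding [CompleteSpace K] [MeasurableSpace K] [BorelSpace K]
    (hg : ProperContraction g) : MeasurableEmbedding g :=
  hg.isClosedEmbedding.measurableEmbedding

end ProperContraction

namespace IsHutchinsonMeasure

variable {K : Type*} [MetricSpace K] [MeasurableSpace K] {n : ℕ} {γ : Fin n → K → K}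
  {μ : Measure K}

theorem isSelfSimilarMeasure (hμ : IsHutchinsonMeasure γ μ) :
    IsSelfSimilarMeasure γ (fun _ => (n : ℝ)⁻¹) μ := by
  refine ⟨hμ.1, fun E hE => ?_⟩
  rw [hμ.2 E hE, Finset.mul_sum]
  refine Finset.sum_congr rfl fun j _ => ?_
  rw [ENNReal.ofReal_inv_of_pos (Nat.cast_pos.2 j.pos), ENNReal.ofReal_natCast]

theorem measure_preimage_eq_zero (hμ : IsHutchinsonMeasure γ μ) {N : Set K}
    (hN : MeasurableSet N) (hN0 : μ N = 0) (j : Fin n) : μ (γ j ⁻¹' N) = 0 := by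
  have hsum : ∑ k, μ (γ k ⁻¹' N) = 0 := by
    simpa [hN0, eq_comm (a := (0 : ℝ≥0∞))] using hμ.2 N hN
  exact Finset.sum_eq_zero_iff.1 hsum j (Finset.mem_univ j)

/-- In the self-similarity identity for `μ (γ i '' E)` only the `i`-th term survives: the others
are preimages of the null overlaps `γ i (K) ∩ γ j (K)`. -/
theorem measure_image (hμ : IsHutchinsonMeasure γ μ) (hγ : ∀ j, MeasurableEmbedding (γ j))
    {i : Fin n} (hoverlap : ∀ j, j ≠ i → μ (γ i '' univ ∩ γ j '' univ) = 0)
    {E : Set K} (hE : MeasurableSet E) : μ (γ i '' E) = (n : ℝ≥0∞)⁻¹ * μ E := by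
  have hpiece : ∀ j, MeasurableSet (γ j '' univ) := fun j =>
    (hγ j).measurableSet_image.2 MeasurableSet.univ
  have hoff : ∀ j, j ≠ i → μ (γ j ⁻¹' (γ i '' E)) = 0 := fun j hj =>
    measure_mono_null
      (fun x hx => show γ j x ∈ γ i '' univ ∩ γ j '' univ from
        ⟨image_mono (subset_univ E) hx, mem_image_of_mem _ trivial⟩)
      (hμ.measure_preimage_eq_zero ((hpiece i).inter (hpiece j)) (hoverlap j hj) j)
  rw [hμ.2 _ ((hγ i).measurableSet_image.2 hE),
    Finset.sum_eq_single i (fun j _ => hoff j) (absurd (Finset.mem_univ i)),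
    preimage_image_eq E (hγ i).injective]

end IsHutchinsonMeasure

theorem hutchinson_measure_image_general {K : Type*} [MetricSpace K] [CompactSpace K]
    [MeasurableSpace K] [BorelSpace K] {n : ℕ}
    (γ : Fin n → K → K) (hγ : ∀ i, ProperContraction (γ i))
    (hsep : MeasureSeparation γ)
    (μ : Measure K) (hμ : IsHutchinsonMeasure γ μ)
    (E : Set K) (hE : MeasurableSet E) (i : Fin n) :
    μ (γ i '' E) = (n : ℝ≥0∞)⁻¹ * μ E := by
  have hn : (0 : ℝ) < n := Nat.cast_pos.2 i.pos
  have hweights : ∑ _j : Fin n, (n : ℝ)⁻¹ = 1 := by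
    rw [Finset.sum_const, Finset.card_univ, Fintype.card_fin, nsmul_eq_mul, mul_inv_cancel₀ hn.ne']
  refine hμ.measure_image (fun j => (hγ j).measurableEmbedding) (fun j hj => ?_) hE
  exact hsep _ (fun _ => inv_pos.2 hn) hweights μ hμ.isSelfSimilarMeasure i j hj.symm

/-- If `K` is self-similar with respect to `γ` and `γ` satisfies the measure separation
condition, then the Hutchinson measure satisfies `μ (γ i '' E) = (1/n) * μ E` for every
Borel set `E` and every `i`. -/
theorem hutchinson_measure_image {K : Type*} [MetricSpace K] [CompactSpace K] [Nonempty K]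
    [MeasurableSpace K] [BorelSpace K] {n : ℕ} (hn : 1 ≤ n)
    (γ : Fin n → K → K) (hγ : ∀ i, ProperContraction (γ i))
    (hss : SelfSimilarSet γ) (hsep : MeasureSeparation γ)
    (μ : Measure K) (hμ : IsHutchinsonMeasure γ μ)
    (E : Set K) (hE : MeasurableSet E) (i : Fin n) :
    μ (γ i '' E) = (n : ℝ≥0∞)⁻¹ * μ E :=
  hutchinson_measure_image_general γ hγ hsep μ hμ E hE i
end
end

section
/- Let (K, d) be a compact metric space, let γ = (γ₁, …, γₙ) be a system of proper contractions on K, and let φ: K → K be a Borel measurable map having γ₁, …, γₙ as inverse branches. Assume that K is self-similar with respect to γ and that γ satisfies the measure separation condition in K. Then φ preserves the Hutchinson measure, i.e., the pushforward measure φ_*μ^H equals μ^H (equivalently, μ^H(φ⁻¹(E)) = μ^H(E) for every Borel set E). -/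
open MeasureTheory Set Filter Topology
open scoped ENNReal NNReal

noncomputable section

/-!
Pushing the self-similarity identity `μ = ∑ᵢ pᵢ (γᵢ)_* μ` forward by `φ` and using `φ ∘ γᵢ = id`
gives `φ_* μ = (∑ᵢ pᵢ) μ = μ`.
-/

theorem map_eq_self_of_leftInverse_branches {α ι : Type*} [MeasurableSpace α] [Fintype ι]
    {μ : Measure α} {γ : ι → α → α} {w : ι → ℝ≥0∞} {φ : α → α}
    (hμ : ∀ E, MeasurableSet E → μ E = ∑ i, w i * μ (γ i ⁻¹' E)) (hw : ∑ i, w i = 1)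
    (hφ : Measurable φ) (hbranch : ∀ i, Function.LeftInverse φ (γ i)) :
    μ.map φ = μ := by
  ext E hE
  have hpreimage : ∀ i, γ i ⁻¹' (φ ⁻¹' E) = E := fun i => by
    rw [← preimage_comp, (hbranch i).comp_eq_id, preimage_id]
  rw [Measure.map_apply hφ hE, hμ _ (hφ hE)]
  simp only [hpreimage, ← Finset.sum_mul, hw, one_mul]

theorem IsHutchinsonMeasure.ne_zero {K : Type*} [MetricSpace K] [MeasurableSpace K] {n : ℕ}
    {γ : Fin n → K → K} {μ : Measure K} (hμ : IsHutchinsonMeasure γ μ) : n ≠ 0 := by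
  rintro rfl
  have := hμ.1
  simpa using hμ.2 univ MeasurableSet.univ

theorem hutchinson_measure_preserving_general {K : Type*} [MetricSpace K] [MeasurableSpace K] {n : ℕ}
    (γ : Fin n → K → K) (φ : K → K) (hφ : Measurable φ)
    (hbranch : ∀ (i : Fin n) (x : K), φ (γ i x) = x)
    (μ : Measure K) (hμ : IsHutchinsonMeasure γ μ) :
    Measure.map φ μ = μ := by
  have hn : (n : ℝ≥0∞) ≠ 0 := Nat.cast_ne_zero.mpr hμ.ne_zero
  refine map_eq_self_of_leftInverse_branches (w := fun _ => (n : ℝ≥0∞)⁻¹)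
    (fun E hE => by rw [hμ.2 E hE, Finset.mul_sum]) ?_ hφ hbranch
  rw [Finset.sum_const, Finset.card_univ, Fintype.card_fin, nsmul_eq_mul,
    ENNReal.mul_inv_cancel hn (ENNReal.natCast_ne_top n)]

/-- If `K` is self-similar with respect to `γ`, `γ` satisfies the measure separation condition,
and the Borel measurable map `φ` has `γ₁, …, γₙ` as inverse branches, then `φ` preserves the
Hutchinson measure: `Measure.map φ μ = μ`. -/
theorem hutchinson_measure_preserving {K : Type*} [MetricSpace K] [CompactSpace K] [Nonempty K]
    [MeasurableSpace K] [BorelSpace K] {n : ℕ} (hn : 1 ≤ n)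
    (γ : Fin n → K → K) (hγ : ∀ i, ProperContraction (γ i))
    (φ : K → K) (hφ : Measurable φ) (hbranch : ∀ (i : Fin n) (x : K), φ (γ i x) = x)
    (hss : SelfSimilarSet γ) (hsep : MeasureSeparation γ)
    (μ : Measure K) (hμ : IsHutchinsonMeasure γ μ) :
    Measure.map φ μ = μ :=
  hutchinson_measure_preserving_general γ φ hφ hbranch μ hμ
end
end

section
/- Let (K, d) be a compact metric space, let γ = (γ₁, …, γₙ) be a system of proper contractions on K, and let φ: K → K be a Borel measurable map having γ₁, …, γₙ as inverse branches. Assume that K is self-similar with respect to γ and that γ satisfies the measure separation condition in K. Then for every 1 ≤ p < ∞ and every f ∈ L^p(K, μ^H) (complex valued), the function f∘φ belongs to L^p(K, μ^H) and ‖f∘φ‖_p = ‖f‖_p; that is, the composition operator C_φ f = f∘φ is an isometry on L^p(K, μ^H). -/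
open MeasureTheory Set Filter Topology
open scoped ENNReal NNReal

noncomputable section

/-! Each `γ i` is a right inverse of `φ`, so `γ i ⁻¹' (φ ⁻¹' E) = E` and the Hutchinson identity
collapses to `μ (φ ⁻¹' E) = n⁻¹ * n * μ E = μ E`. Hence `φ` preserves `μ^H`, and composition
with a measure-preserving map is an isometry of every `L^p`. -/

theorem IsHutchinsonMeasure.measurePreserving {K : Type*} [MetricSpace K] [MeasurableSpace K]
    {n : ℕ} {γ : Fin n → K → K} {μ : Measure K} (hμ : IsHutchinsonMeasure γ μ) {φ : K → K}
    (hφ : Measurable φ) (hbranch : ∀ i x, φ (γ i x) = x) : MeasurePreserving φ μ μ := by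
  obtain ⟨hprob, hself⟩ := hμ
  have hn : (n : ℝ≥0∞) ≠ 0 := Nat.cast_ne_zero.mpr <| by
    rintro rfl
    -- with no maps the identity reads `μ univ = ⊤ * 0 = 0`
    simpa using hself univ MeasurableSet.univ
  refine ⟨hφ, Measure.ext fun E hE => ?_⟩
  have hpre : ∀ i, γ i ⁻¹' (φ ⁻¹' E) = E := fun i => by
    ext x
    simp [hbranch i x]
  rw [Measure.map_apply hφ hE, hself _ (hφ hE)]
  simp only [hpre, Finset.sum_const, Finset.card_univ, Fintype.card_fin, nsmul_eq_mul]
  rw [← mul_assoc, ENNReal.inv_mul_cancel hn (ENNReal.natCast_ne_top n), one_mul]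

theorem composition_isometry_Lp_general {K : Type*} [MetricSpace K] [MeasurableSpace K] {n : ℕ}
    (γ : Fin n → K → K)
    (φ : K → K) (hφ : Measurable φ) (hbranch : ∀ (i : Fin n) (x : K), φ (γ i x) = x)
    (μ : Measure K) (hμ : IsHutchinsonMeasure γ μ)
    (p : ℝ≥0∞)
    (f : K → ℂ) (hf : MemLp f p μ) :
    MemLp (f ∘ φ) p μ ∧ eLpNorm (f ∘ φ) p μ = eLpNorm f p μ := by
  have hmp := hμ.measurePreserving hφ hbranch
  exact ⟨hf.comp_measurePreserving hmp,
    eLpNorm_comp_measurePreserving hf.aestronglyMeasurable hmp⟩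

/-- Under the hypotheses of self-similarity and measure separation, for every `1 ≤ p < ∞`
the composition operator `C_φ f = f ∘ φ` is an isometry on `L^p(K, μ^H)`:
`f ∘ φ ∈ L^p` and `‖f ∘ φ‖_p = ‖f‖_p`. -/
theorem composition_isometry_Lp {K : Type*} [MetricSpace K] [CompactSpace K] [Nonempty K]
    [MeasurableSpace K] [BorelSpace K] {n : ℕ} (hn : 1 ≤ n)
    (γ : Fin n → K → K) (hγ : ∀ i, ProperContraction (γ i))
    (φ : K → K) (hφ : Measurable φ) (hbranch : ∀ (i : Fin n) (x : K), φ (γ i x) = x)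
    (hss : SelfSimilarSet γ) (hsep : MeasureSeparation γ)
    (μ : Measure K) (hμ : IsHutchinsonMeasure γ μ)
    (p : ℝ≥0∞) (hp1 : 1 ≤ p) (hp2 : p ≠ ∞)
    (f : K → ℂ) (hf : MemLp f p μ) :
    MemLp (f ∘ φ) p μ ∧ eLpNorm (f ∘ φ) p μ = eLpNorm f p μ :=
  composition_isometry_Lp_general γ φ hφ hbranch μ hμ p f hf
end
end

section
/- Let (K, d) be a compact metric space, let γ = (γ₁, …, γₙ) be a system of proper contractions on K, and let φ: K → K be a Borel measurable map having γ₁, …, γₙ as inverse branches. Assume that K is self-similar with respect to γ and that γ satisfies the measure separation condition in K. Then for every f ∈ L^∞(K, μ^H) and every g ∈ L¹(K, μ^H) (complex valued), ∫_K f(x)·g(φ(x)) dμ^H(x) = ∫_K (L_φ f)(y)·g(y) dμ^H(y), where (L_φ f)(y) = (1/n)·Σ_{i=1}^n f(γᵢ(y)). -/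
open MeasureTheory Set Filter Topology
open scoped ENNReal NNReal

/-! The Hutchinson identity says `μ = n⁻¹ • ∑ i, (γ i)_* μ`. Integrating `f · (g ∘ φ)` against
the right-hand side and using `φ ∘ γ i = id` turns the `i`-th term into `∫ f (γ i y) g y dμ`.
The same identity makes `φ` measure preserving, and in the form `∑ i, (γ i)_* μ = n • μ` it
passes integrability against `μ` to each `(γ i)_* μ`, which is what splitting the integral needs. -/

noncomputable section

theorem ProperContraction.continuous {K : Type*} [MetricSpace K] {g : K → K}
    (hg : ProperContraction g) : Continuous g := by
  obtain ⟨_, c, -, -, -, hc⟩ := hg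
  exact (LipschitzWith.of_dist_le_mul (K := c.toNNReal) fun x y =>
    (hc x y).2.trans (by gcongr; exact Real.le_coe_toNNReal c)).continuous

namespace IsHutchinsonMeasure

variable {K : Type*} [MetricSpace K] [MeasurableSpace K] {n : ℕ} {γ : Fin n → K → K}
  {μ : Measure K}

theorem card_ne_zero (hμ : IsHutchinsonMeasure γ μ) : n ≠ 0 := by
  rintro rfl
  have := hμ.1
  simpa using hμ.2 univ MeasurableSet.univ

theorem sum_map_eq_smul (hμ : IsHutchinsonMeasure γ μ) (hγ : ∀ i, Measurable (γ i)) :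
    ∑ i, μ.map (γ i) = (n : ℝ≥0∞) • μ := by
  ext E hE
  rw [Measure.smul_apply, Measure.finsetSum_apply, hμ.2 E hE, smul_eq_mul, ← mul_assoc,
    ENNReal.mul_inv_cancel (by exact_mod_cast hμ.card_ne_zero) (ENNReal.natCast_ne_top n), one_mul]
  exact Finset.sum_congr rfl fun i _ => Measure.map_apply (hγ i) hE

theorem measurePreserving_of_leftInverse (hμ : IsHutchinsonMeasure γ μ) {φ : K → K}
    (hφ : Measurable φ) (hbranch : ∀ i, Function.LeftInverse φ (γ i)) :
    MeasurePreserving φ μ μ := by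
  refine ⟨hφ, Measure.ext fun E hE => ?_⟩
  have hpre : ∀ i, γ i ⁻¹' (φ ⁻¹' E) = E := fun i => by ext x; simp [hbranch i x]
  rw [Measure.map_apply hφ hE, hμ.2 _ (hφ hE)]
  simp only [hpre, Finset.sum_const, Finset.card_univ, Fintype.card_fin, nsmul_eq_mul]
  rw [← mul_assoc, ENNReal.inv_mul_cancel (by exact_mod_cast hμ.card_ne_zero)
    (ENNReal.natCast_ne_top n), one_mul]

variable {E : Type*} [NormedAddCommGroup E] {h : K → E}

theorem integrable_map (hμ : IsHutchinsonMeasure γ μ) (hγ : ∀ i, Measurable (γ i))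
    (hh : Integrable h μ) (i : Fin n) : Integrable h (μ.map (γ i)) := by
  have : Integrable h (∑ j, μ.map (γ j)) := by
    rw [hμ.sum_map_eq_smul hγ]
    exact hh.smul_measure (ENNReal.natCast_ne_top n)
  exact integrable_finsetSum_measure.mp this i (Finset.mem_univ i)

theorem integrable_comp (hμ : IsHutchinsonMeasure γ μ) (hγ : ∀ i, Measurable (γ i))
    (hh : Integrable h μ) (i : Fin n) : Integrable (fun x => h (γ i x)) μ :=
  (integrable_map_measure (hμ.integrable_map hγ hh i).1 (hγ i).aemeasurable).mp
    (hμ.integrable_map hγ hh i)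

theorem integral_eq_inv_smul_sum [NormedSpace ℝ E] (hμ : IsHutchinsonMeasure γ μ)
    (hγ : ∀ i, Measurable (γ i)) (hh : Integrable h μ) :
    ∫ x, h x ∂μ = (n : ℝ)⁻¹ • ∑ i, ∫ x, h (γ i x) ∂μ := by
  have hn : (n : ℝ) ≠ 0 := by exact_mod_cast hμ.card_ne_zero
  have hsum : (n : ℝ) • ∫ x, h x ∂μ = ∑ i, ∫ x, h (γ i x) ∂μ := by
    rw [← ENNReal.toReal_natCast, ← integral_smul_measure, ← hμ.sum_map_eq_smul hγ,
      integral_finsetSum_measure fun i _ => hμ.integrable_map hγ hh i]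
    exact Finset.sum_congr rfl fun i _ =>
      integral_map (hγ i).aemeasurable (hμ.integrable_map hγ hh i).1
  rw [← hsum, smul_smul, inv_mul_cancel₀ hn, one_smul]

end IsHutchinsonMeasure

theorem transfer_operator_duality_general {K : Type*} [MetricSpace K]
    [MeasurableSpace K] [BorelSpace K] {n : ℕ}
    (γ : Fin n → K → K) (hγ : ∀ i, ProperContraction (γ i))
    (φ : K → K) (hφ : Measurable φ) (hbranch : ∀ (i : Fin n) (x : K), φ (γ i x) = x)
    (μ : Measure K) (hμ : IsHutchinsonMeasure γ μ)
    (f : K → ℂ) (hf : MemLp f ∞ μ)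
    (g : K → ℂ) (hg : Integrable g μ) :
    ∫ x, f x * g (φ x) ∂μ = ∫ y, ((n : ℂ)⁻¹ * ∑ i, f (γ i y)) * g y ∂μ := by
  have hγm : ∀ i, Measurable (γ i) := fun i => (hγ i).continuous.measurable
  have hgφ : Integrable (g ∘ φ) μ :=
    (hμ.measurePreserving_of_leftInverse hφ hbranch).integrable_comp_of_integrable hg
  have hfg : Integrable (fun x => f x * g (φ x)) μ := hgφ.mul_of_top_right hf
  have hterm : ∀ i, Integrable (fun y => f (γ i y) * g y) μ := fun i => by
    simpa only [hbranch] using hμ.integrable_comp hγm hfg i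
  simp only [hμ.integral_eq_inv_smul_sum hγm hfg, hbranch]
  rw [← integral_finsetSum _ fun i _ => hterm i, ← integral_smul]
  simp only [Finset.sum_mul, Finset.mul_sum, Complex.real_smul, Complex.ofReal_inv,
    Complex.ofReal_natCast, mul_assoc]

/-- Under self-similarity and measure separation, for `f ∈ L^∞(K, μ^H)` and `g ∈ L¹(K, μ^H)`,
`∫ f(x) g(φ(x)) dμ^H(x) = ∫ (L_φ f)(y) g(y) dμ^H(y)`, where
`(L_φ f)(y) = (1/n) ∑ᵢ f(γᵢ(y))`. -/
theorem transfer_operator_duality {K : Type*} [MetricSpace K] [CompactSpace K] [Nonempty K]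
    [MeasurableSpace K] [BorelSpace K] {n : ℕ} (hn : 1 ≤ n)
    (γ : Fin n → K → K) (hγ : ∀ i, ProperContraction (γ i))
    (φ : K → K) (hφ : Measurable φ) (hbranch : ∀ (i : Fin n) (x : K), φ (γ i x) = x)
    (hss : SelfSimilarSet γ) (hsep : MeasureSeparation γ)
    (μ : Measure K) (hμ : IsHutchinsonMeasure γ μ)
    (f : K → ℂ) (hf : MemLp f ∞ μ)
    (g : K → ℂ) (hg : Integrable g μ) :
    ∫ x, f x * g (φ x) ∂μ = ∫ y, ((n : ℂ)⁻¹ * ∑ i, f (γ i y)) * g y ∂μ :=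
  transfer_operator_duality_general γ hγ φ hφ hbranch μ hμ f hf g hg
end
end

section
/- Let (K, d) be a compact metric space, let γ = (γ₁, …, γₙ) be a system of proper contractions on K, and assume that K is self-similar with respect to γ and that γ satisfies the measure separation condition in K. Then for every i = 1, …, n and every f ∈ L²(K, μ^H), the function f∘γᵢ belongs to L²(K, μ^H) and ‖f∘γᵢ‖₂ ≤ √n · ‖f‖₂; in particular the composition operator C_{γᵢ} f = f∘γᵢ is bounded on L²(K, μ^H). -/
open MeasureTheory Set Filter Topology
open scoped ENNReal NNReal

noncomputable section

theorem IsHutchinsonMeasure.map_le_smul {K : Type*} [MetricSpace K] [MeasurableSpace K]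
    {n : ℕ} {γ : Fin n → K → K} {μ : Measure K} (hμ : IsHutchinsonMeasure γ μ) (i : Fin n)
    (hγi : Measurable (γ i)) : μ.map (γ i) ≤ (n : ℝ≥0∞) • μ := by
  have hn : (n : ℝ≥0∞) ≠ 0 := by simpa using i.pos.ne'
  refine Measure.le_iff.mpr fun E hE => ?_
  have hsum : ∑ j, μ (γ j ⁻¹' E) = n * μ E := by
    rw [hμ.2 E hE, ← mul_assoc, ENNReal.mul_inv_cancel hn (ENNReal.natCast_ne_top n), one_mul]
  calc μ.map (γ i) E = μ (γ i ⁻¹' E) := Measure.map_apply hγi hE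
    _ ≤ ∑ j, μ (γ j ⁻¹' E) :=
      Finset.single_le_sum (f := fun j => μ (γ j ⁻¹' E)) (fun _ _ => zero_le) (Finset.mem_univ i)
    _ = ((n : ℝ≥0∞) • μ) E := by rw [hsum, Measure.smul_apply, smul_eq_mul]

section CompositionBound

variable {α β E : Type*} [MeasurableSpace α] [MeasurableSpace β] [NormedAddCommGroup E]
  {μ : Measure α} {ν : Measure β} {g : α → β} {c : ℝ≥0∞} {p : ℝ≥0∞} {f : β → E}

theorem eLpNorm_comp_le_of_map_le_smul (hg : Measurable g) (hle : μ.map g ≤ c • ν)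
    (hp : p ≠ ∞) (hf : AEStronglyMeasurable f ν) :
    eLpNorm (f ∘ g) p μ ≤ c ^ (1 / p).toReal * eLpNorm f p ν := by
  have hf' : AEStronglyMeasurable f (μ.map g) :=
    hf.mono_ac (Measure.absolutelyContinuous_of_le_smul hle)
  calc eLpNorm (f ∘ g) p μ = eLpNorm f p (μ.map g) :=
        (eLpNorm_map_measure hf' hg.aemeasurable).symm
    _ ≤ eLpNorm f p (c • ν) := eLpNorm_mono_measure f hle
    _ = c ^ (1 / p).toReal * eLpNorm f p ν := eLpNorm_smul_measure_of_ne_top hp f c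

theorem MeasureTheory.MemLp.comp_of_map_le_smul (hg : Measurable g) (hle : μ.map g ≤ c • ν) (hc : c ≠ ∞)
    (hp : p ≠ ∞) (hf : MemLp f p ν) : MemLp (f ∘ g) p μ := by
  refine ⟨(hf.1.mono_ac (Measure.absolutelyContinuous_of_le_smul hle)).comp_measurable hg, ?_⟩
  refine (eLpNorm_comp_le_of_map_le_smul hg hle hp hf.1).trans_lt ?_
  exact ENNReal.mul_lt_top (ENNReal.rpow_lt_top_of_nonneg (by positivity) hc) hf.2

end CompositionBound

theorem ENNReal.natCast_rpow_half (n : ℕ) :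
    (n : ℝ≥0∞) ^ (1 / 2 : ℝ) = ENNReal.ofReal (Real.sqrt n) := by
  rw [Real.sqrt_eq_rpow, ← ENNReal.ofReal_rpow_of_nonneg (by positivity) (by norm_num)]
  simp

theorem composition_by_branch_bounded_general {K : Type*} [MetricSpace K]
    [MeasurableSpace K] [BorelSpace K] {n : ℕ}
    (γ : Fin n → K → K) (hγ : ∀ i, ProperContraction (γ i))
    (μ : Measure K) (hμ : IsHutchinsonMeasure γ μ)
    (i : Fin n) (f : K → ℂ) (hf : MemLp f 2 μ) :
    MemLp (f ∘ γ i) 2 μ ∧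
      eLpNorm (f ∘ γ i) 2 μ ≤ ENNReal.ofReal (Real.sqrt n) * eLpNorm f 2 μ := by
  have hγi : Measurable (γ i) := (hγ i).continuous.measurable
  have hle := hμ.map_le_smul i hγi
  refine ⟨hf.comp_of_map_le_smul hγi hle (ENNReal.natCast_ne_top n) ENNReal.ofNat_ne_top, ?_⟩
  have hbound := eLpNorm_comp_le_of_map_le_smul hγi hle (p := 2) ENNReal.ofNat_ne_top hf.1
  rwa [show (1 / 2 : ℝ≥0∞).toReal = 1 / 2 by norm_num, ENNReal.natCast_rpow_half] at hbound

/-- Under self-similarity and measure separation, for each `i` the composition operator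
`C_{γᵢ} f = f ∘ γᵢ` is bounded on `L²(K, μ^H)` with `‖f ∘ γᵢ‖₂ ≤ √n ‖f‖₂`. -/
theorem composition_by_branch_bounded {K : Type*} [MetricSpace K] [CompactSpace K] [Nonempty K]
    [MeasurableSpace K] [BorelSpace K] {n : ℕ} (hn : 1 ≤ n)
    (γ : Fin n → K → K) (hγ : ∀ i, ProperContraction (γ i))
    (hss : SelfSimilarSet γ) (hsep : MeasureSeparation γ)
    (μ : Measure K) (hμ : IsHutchinsonMeasure γ μ)
    (i : Fin n) (f : K → ℂ) (hf : MemLp f 2 μ) :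
    MemLp (f ∘ γ i) 2 μ ∧
      eLpNorm (f ∘ γ i) 2 μ ≤ ENNReal.ofReal (Real.sqrt n) * eLpNorm f 2 μ :=
  composition_by_branch_bounded_general γ hγ μ hμ i f hf
end
end

section
/- Let (K, d) be a compact metric space, let γ = (γ₁, …, γₙ) be a system of proper contractions on K, and let φ: K → K be continuous with γ₁, …, γₙ as inverse branches. Assume that K is self-similar with respect to γ and that γ satisfies the measure separation condition in K. Let C_φ and C_{γᵢ} denote the bounded composition operators f ↦ f∘φ and f ↦ f∘γᵢ on L²(K, μ^H), and for a ∈ C(K) let M_a be the multiplication operator. Then the C*-subalgebra of bounded operators on L²(K, μ^H) generated by {M_a : a ∈ C(K)} ∪ {C_φ} is contained in the C*-subalgebra generated by {M_a : a ∈ C(K)} ∪ {C_{γ₁}, …, C_{γₙ}}. -/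
/-! The Hutchinson measure is the average `μ = n⁻¹ ∑ᵢ (γᵢ)_* μ` of its push-forwards, and
`φ ∘ γᵢ = id`. Hence
`⟪g, C_φ f⟫ = ∫ ḡ · (f ∘ φ) dμ = n⁻¹ ∑ᵢ ∫ (g ∘ γᵢ)‾ · f dμ = n⁻¹ ∑ᵢ ⟪C_{γᵢ} g, f⟫`,
that is `C_φ = n⁻¹ ∑ᵢ C_{γᵢ}*`, which lies in the *-algebra generated by the `C_{γᵢ}`. -/

open MeasureTheory Set Filter Topology
open scoped ENNReal NNReal

noncomputable section

theorem ProperContraction.lipschitzWith_s8 {K : Type*} [MetricSpace K] {g : K → K}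
    (hg : ProperContraction g) : ∃ c : ℝ≥0, LipschitzWith c g := by
  obtain ⟨c₁, c₂, -, -, -, hdist⟩ := hg
  refine ⟨c₂.toNNReal, LipschitzWith.of_dist_le_mul fun x y => ?_⟩
  calc dist (g x) (g y) ≤ c₂ * dist x y := (hdist x y).2
    _ ≤ c₂.toNNReal * dist x y := by gcongr; exact Real.le_coe_toNNReal c₂

section Hutchinson

variable {K : Type*} [MetricSpace K] [MeasurableSpace K] {n : ℕ} {γ : Fin n → K → K}
  {μ : Measure K}

theorem IsHutchinsonMeasure.eq_inv_smul_sum_map (hμ : IsHutchinsonMeasure γ μ)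
    (hγ : ∀ i, Measurable (γ i)) : μ = (n : ℝ≥0∞)⁻¹ • ∑ i, μ.map (γ i) := by
  ext E hE
  simp only [Measure.smul_apply, Measure.coe_finsetSum, Finset.sum_apply,
    Measure.map_apply (hγ _) hE, smul_eq_mul]
  exact hμ.2 E hE

theorem IsHutchinsonMeasure.integral_eq_inv_smul_sum_s8
    {E : Type*} [NormedAddCommGroup E] [NormedSpace ℝ E]
    (hμ : IsHutchinsonMeasure γ μ) (hγ : ∀ i, Measurable (γ i)) {h : K → E}
    (hh : StronglyMeasurable h) (hint : ∀ i, Integrable (h ∘ γ i) μ) :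
    ∫ x, h x ∂μ = (n : ℝ)⁻¹ • ∑ i, ∫ x, h (γ i x) ∂μ := by
  have hint_map : ∀ i, Integrable h (μ.map (γ i)) := fun i =>
    (integrable_map_measure hh.aestronglyMeasurable (hγ i).aemeasurable).2 (hint i)
  conv_lhs => rw [hμ.eq_inv_smul_sum_map hγ]
  rw [integral_smul_measure, integral_finsetSum_measure fun i _ => hint_map i]
  congr 1
  · simp
  · exact Finset.sum_congr rfl fun i _ =>
      integral_map (hγ i).aemeasurable hh.aestronglyMeasurable

end Hutchinson

def IsCompositionOperator {K 𝕜 : Type*} [MeasurableSpace K] [RCLike 𝕜] (μ : Measure K)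
    (ψ : K → K) (T : Lp 𝕜 2 μ →L[𝕜] Lp 𝕜 2 μ) : Prop :=
  ∀ f : Lp 𝕜 2 μ, (T f : K → 𝕜) =ᵐ[μ] fun x => f (ψ x)

section CompositionOperator

variable {K 𝕜 : Type*} [MetricSpace K] [MeasurableSpace K] [RCLike 𝕜] {n : ℕ}
  {γ : Fin n → K → K} {φ : K → K} {μ : Measure K}

theorem IsCompositionOperator.eq_inv_smul_sum_adjoint (hμ : IsHutchinsonMeasure γ μ)
    (hγ : ∀ i, Measurable (γ i)) (hφ : Measurable φ) (hbranch : ∀ i x, φ (γ i x) = x)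
    {Cφ : Lp 𝕜 2 μ →L[𝕜] Lp 𝕜 2 μ} (hCφ : IsCompositionOperator μ φ Cφ)
    {Cγ : Fin n → Lp 𝕜 2 μ →L[𝕜] Lp 𝕜 2 μ} (hCγ : ∀ i, IsCompositionOperator μ (γ i) (Cγ i)) :
    Cφ = (n : 𝕜)⁻¹ • ∑ i, (Cγ i).adjoint := by
  refine ContinuousLinearMap.ext fun f => ext_inner_left 𝕜 fun g => ?_
  set h : K → 𝕜 := fun x => inner 𝕜 (g x) (f (φ x))
  have hh : StronglyMeasurable h :=
    (Lp.stronglyMeasurable g).inner ((Lp.stronglyMeasurable f).comp_measurable hφ)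
  have h_comp : ∀ i, h ∘ γ i =ᵐ[μ] fun x => inner 𝕜 (Cγ i g x) (f x) := fun i => by
    filter_upwards [hCγ i g] with x hx
    simp [h, hx, hbranch i x]
  have h_int : ∀ i, Integrable (h ∘ γ i) μ := fun i =>
    (L2.integrable_inner (Cγ i g) f).congr (h_comp i).symm
  calc inner 𝕜 g (Cφ f) = ∫ x, h x ∂μ := by
        rw [L2.inner_def]
        refine integral_congr_ae ?_
        filter_upwards [hCφ f] with x hx
        simp [h, hx]
    _ = (n : ℝ)⁻¹ • ∑ i, ∫ x, h (γ i x) ∂μ := hμ.integral_eq_inv_smul_sum_s8 hγ hh h_int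
    _ = (n : 𝕜)⁻¹ * ∑ i, inner 𝕜 (Cγ i g) f := by
        simp only [L2.inner_def, ← integral_congr_ae (h_comp _), RCLike.real_smul_eq_coe_mul]
        push_cast
        rfl
    _ = inner 𝕜 g (((n : 𝕜)⁻¹ • ∑ i, (Cγ i).adjoint) f) := by
        simp [inner_smul_right, inner_sum, ContinuousLinearMap.adjoint_inner_right]

end CompositionOperator

theorem MCphi_subset_MCgamma_general {K : Type*} [MetricSpace K]
    [MeasurableSpace K] [BorelSpace K] {n : ℕ}
    (γ : Fin n → K → K) (hγ : ∀ i, ProperContraction (γ i))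
    (φ : K → K) (hφ : Continuous φ) (hbranch : ∀ (i : Fin n) (x : K), φ (γ i x) = x)
    (μ : Measure K) (hμ : IsHutchinsonMeasure γ μ)
    (M : C(K, ℂ) → (Lp ℂ 2 μ →L[ℂ] Lp ℂ 2 μ))
    (Cφ : Lp ℂ 2 μ →L[ℂ] Lp ℂ 2 μ)
    (hCφ : ∀ f : Lp ℂ 2 μ, (Cφ f : K → ℂ) =ᵐ[μ] fun x => f (φ x))
    (Cγ : Fin n → (Lp ℂ 2 μ →L[ℂ] Lp ℂ 2 μ))
    (hCγ : ∀ (i : Fin n) (f : Lp ℂ 2 μ), (Cγ i f : K → ℂ) =ᵐ[μ] fun x => f (γ i x)) :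
    (StarAlgebra.adjoin ℂ (Set.range M ∪ {Cφ})).topologicalClosure ≤
      (StarAlgebra.adjoin ℂ (Set.range M ∪ Set.range Cγ)).topologicalClosure := by
  have hCγ_mem : ∀ i, Cγ i ∈ StarAlgebra.adjoin ℂ (Set.range M ∪ Set.range Cγ) := fun i =>
    StarAlgebra.subset_adjoin ℂ _ (Or.inr ⟨i, rfl⟩)
  have hCφ_mem : Cφ ∈ StarAlgebra.adjoin ℂ (Set.range M ∪ Set.range Cγ) := by
    rw [IsCompositionOperator.eq_inv_smul_sum_adjoint hμ (fun i => (hγ i).continuous.measurable)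
      hφ.measurable hbranch hCφ hCγ]
    refine SMulMemClass.smul_mem _ (sum_mem fun i _ => ?_)
    rw [← ContinuousLinearMap.star_eq_adjoint]
    exact star_mem (hCγ_mem i)
  refine StarSubalgebra.topologicalClosure_mono (StarAlgebra.adjoin_le ?_)
  rintro T (⟨a, rfl⟩ | rfl)
  · exact StarAlgebra.subset_adjoin ℂ _ (Or.inl ⟨a, rfl⟩)
  · exact hCφ_mem

/-- The C*-algebra `MC_φ` generated by the multiplication operators and the composition
operator `C_φ` is contained in the C*-algebra `MC_{γ₁,…,γₙ}` generated by the multiplication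
operators and the composition operators `C_{γᵢ}`. -/
theorem MCphi_subset_MCgamma {K : Type*} [MetricSpace K] [CompactSpace K] [Nonempty K]
    [MeasurableSpace K] [BorelSpace K] {n : ℕ} (hn : 1 ≤ n)
    (γ : Fin n → K → K) (hγ : ∀ i, ProperContraction (γ i))
    (φ : K → K) (hφ : Continuous φ) (hbranch : ∀ (i : Fin n) (x : K), φ (γ i x) = x)
    (hss : SelfSimilarSet γ) (hsep : MeasureSeparation γ)
    (μ : Measure K) (hμ : IsHutchinsonMeasure γ μ)
    (M : C(K, ℂ) → (Lp ℂ 2 μ →L[ℂ] Lp ℂ 2 μ))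
    (hM : ∀ (a : C(K, ℂ)) (f : Lp ℂ 2 μ), (M a f : K → ℂ) =ᵐ[μ] fun x => a x * f x)
    (Cφ : Lp ℂ 2 μ →L[ℂ] Lp ℂ 2 μ)
    (hCφ : ∀ f : Lp ℂ 2 μ, (Cφ f : K → ℂ) =ᵐ[μ] fun x => f (φ x))
    (Cγ : Fin n → (Lp ℂ 2 μ →L[ℂ] Lp ℂ 2 μ))
    (hCγ : ∀ (i : Fin n) (f : Lp ℂ 2 μ), (Cγ i f : K → ℂ) =ᵐ[μ] fun x => f (γ i x)) :
    (StarAlgebra.adjoin ℂ (Set.range M ∪ {Cφ})).topologicalClosure ≤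
      (StarAlgebra.adjoin ℂ (Set.range M ∪ Set.range Cγ)).topologicalClosure :=
  MCphi_subset_MCgamma_general γ hγ φ hφ hbranch μ hμ M Cφ hCφ Cγ hCγ
end
end

section
/- Let (K, d) be a compact metric space, let γ = (γ₁, …, γₙ) be a system of proper contractions on K, and let φ: K → K be continuous with γ₁, …, γₙ as inverse branches. Assume that K is self-similar with respect to γ and that γ satisfies the measure separation condition in K. Let C_φ be the composition operator and M_b the multiplication operators on L²(K, μ^H). Then for any finitely many u₁, …, u_N ∈ C(K) and any a ∈ C(K), one has the identity in L²(K, μ^H): Σ_{i=1}^N M_{uᵢ} C_φ C_φ* M_{\overline{uᵢ}} a = Σ_{i=1}^N uᵢ · ((L_φ(\overline{uᵢ}·a))∘φ), where (L_φ f)(x) = (1/n)·Σ_{j=1}^n f(γⱼ(x)) and \overline{uᵢ} denotes the complex conjugate of uᵢ. -/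
open MeasureTheory Set Filter Topology
open scoped ENNReal NNReal

noncomputable section

namespace IsHutchinsonMeasure

variable {K : Type*} [MetricSpace K] [MeasurableSpace K] {n : ℕ} {γ : Fin n → K → K}
  {μ : Measure K}

theorem eq_inv_smul_sum_map_s10 (hμ : IsHutchinsonMeasure γ μ) (hγ : ∀ i, Measurable (γ i)) :
    μ = (n : ℝ≥0∞)⁻¹ • ∑ i, μ.map (γ i) := by
  ext E hE
  simp only [Measure.smul_apply, Measure.finsetSum_apply, Measure.map_apply (hγ _) hE,
    smul_eq_mul]
  exact hμ.2 E hE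

theorem map_le_smul_s10 (hμ : IsHutchinsonMeasure γ μ) (hn : n ≠ 0) (hγ : ∀ i, Measurable (γ i))
    (i : Fin n) : μ.map (γ i) ≤ (n : ℝ≥0∞) • μ := by
  conv_rhs => rw [hμ.eq_inv_smul_sum_map_s10 hγ, smul_smul,
    ENNReal.mul_inv_cancel (by exact_mod_cast hn) (ENNReal.natCast_ne_top n), one_smul]
  exact Finset.single_le_sum (f := fun i => μ.map (γ i)) (fun _ _ => Measure.zero_le _)
    (Finset.mem_univ i)

theorem integral_eq (hμ : IsHutchinsonMeasure γ μ) (hn : n ≠ 0) (hγ : ∀ i, Measurable (γ i))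
    {E : Type*} [NormedAddCommGroup E] [NormedSpace ℝ E] {G : K → E} (hG : Integrable G μ) :
    ∫ x, G x ∂μ = (n : ℝ)⁻¹ • ∑ i, ∫ x, G (γ i x) ∂μ := by
  have hGi : ∀ i, Integrable G (μ.map (γ i)) := fun i =>
    (hG.smul_measure (ENNReal.natCast_ne_top n)).mono_measure (hμ.map_le_smul_s10 hn hγ i)
  calc ∫ x, G x ∂μ = ∫ x, G x ∂((n : ℝ≥0∞)⁻¹ • ∑ i, μ.map (γ i)) := by
        rw [← hμ.eq_inv_smul_sum_map_s10 hγ]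
    _ = (n : ℝ)⁻¹ • ∑ i, ∫ x, G x ∂(μ.map (γ i)) := by
        rw [integral_smul_measure, integral_finsetSum_measure fun i _ => hGi i,
          ENNReal.toReal_inv, ENNReal.toReal_natCast]
    _ = (n : ℝ)⁻¹ • ∑ i, ∫ x, G (γ i x) ∂μ := by
        congr 1
        exact Finset.sum_congr rfl fun i _ =>
          integral_map (hγ i).aemeasurable (hGi i).aestronglyMeasurable

theorem measurePreserving_s10 (hμ : IsHutchinsonMeasure γ μ) (hn : n ≠ 0) {φ : K → K}
    (hφ : Measurable φ) (hbranch : ∀ i x, φ (γ i x) = x) : MeasurePreserving φ μ μ := by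
  refine ⟨hφ, Measure.ext fun E hE => ?_⟩
  have hpre : ∀ i, γ i ⁻¹' (φ ⁻¹' E) = E := fun i => by ext x; simp [hbranch]
  rw [Measure.map_apply hφ hE, hμ.2 _ (hφ hE)]
  simp only [hpre, Finset.sum_const, Finset.card_univ, Fintype.card_fin, nsmul_eq_mul]
  rw [← mul_assoc, ENNReal.inv_mul_cancel (by exact_mod_cast hn) (ENNReal.natCast_ne_top n),
    one_mul]

end IsHutchinsonMeasure

def transferOperator {K 𝕜 : Type*} [TopologicalSpace K] [RCLike 𝕜] {n : ℕ}
    (γ : Fin n → C(K, K)) (f : C(K, 𝕜)) : C(K, 𝕜) :=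
  (n : 𝕜)⁻¹ • ∑ i, f.comp (γ i)

@[simp]
theorem transferOperator_apply {K 𝕜 : Type*} [TopologicalSpace K] [RCLike 𝕜] {n : ℕ}
    (γ : Fin n → C(K, K)) (f : C(K, 𝕜)) (x : K) :
    transferOperator γ f x = (n : 𝕜)⁻¹ * ∑ i, f (γ i x) := by
  simp [transferOperator]

theorem MeasureTheory.L2.inner_eq_integral_of_ae_eq {α 𝕜 : Type*} [MeasurableSpace α]
    [RCLike 𝕜] {μ : Measure α} {v w : Lp 𝕜 2 μ} {f g : α → 𝕜} (hv : v =ᵐ[μ] f)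
    (hw : w =ᵐ[μ] g) : inner 𝕜 v w = ∫ x, inner 𝕜 (f x) (g x) ∂μ := by
  rw [L2.inner_def]
  refine integral_congr_ae ?_
  filter_upwards [hv, hw] with x hvx hwx
  rw [hvx, hwx]

theorem adjoint_toLp_eq_toLp_transferOperator {K 𝕜 : Type*} [MetricSpace K] [CompactSpace K]
    [MeasurableSpace K] [BorelSpace K] [RCLike 𝕜] {n : ℕ} (hn : n ≠ 0) {γ : Fin n → C(K, K)}
    {μ : Measure K} [IsFiniteMeasure μ] (hμ : IsHutchinsonMeasure (fun i => ⇑(γ i)) μ)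
    {φ : K → K} (hbranch : ∀ i x, φ (γ i x) = x) (C : Lp 𝕜 2 μ →L[𝕜] Lp 𝕜 2 μ)
    (hC : ∀ v : Lp 𝕜 2 μ, C v =ᵐ[μ] fun x => v (φ x)) (f : C(K, 𝕜)) :
    C.adjoint (f.toLp 2 μ 𝕜) = (transferOperator γ f).toLp 2 μ 𝕜 := by
  refine ext_inner_left 𝕜 fun v => ?_
  have hint : Integrable (fun x => inner 𝕜 (v (φ x)) (f x)) μ := by
    refine (L2.integrable_inner (C v) (f.toLp 2 μ 𝕜)).congr ?_
    filter_upwards [hC v, f.coeFn_toLp (p := 2) (𝕜 := 𝕜) μ] with x hCx hfx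
    rw [hCx, hfx]
  calc inner 𝕜 v (C.adjoint (f.toLp 2 μ 𝕜)) = inner 𝕜 (C v) (f.toLp 2 μ 𝕜) :=
        C.adjoint_inner_right _ _
    _ = ∫ x, inner 𝕜 (v (φ x)) (f x) ∂μ :=
        L2.inner_eq_integral_of_ae_eq (hC v) (f.coeFn_toLp μ)
    _ = (n : ℝ)⁻¹ • ∑ i, ∫ x, inner 𝕜 (v x) (f (γ i x)) ∂μ := by
        rw [hμ.integral_eq hn (fun i => (γ i).continuous.measurable) hint]
        simp only [hbranch]
    _ = (n : ℝ)⁻¹ • ∑ i, inner 𝕜 v ((f.comp (γ i)).toLp 2 μ 𝕜) := by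
        congr 1
        exact Finset.sum_congr rfl fun i _ =>
          (L2.inner_eq_integral_of_ae_eq EventuallyEq.rfl ((f.comp (γ i)).coeFn_toLp μ)).symm
    _ = inner 𝕜 v ((transferOperator γ f).toLp 2 μ 𝕜) := by
        rw [transferOperator, map_smul, map_sum, inner_smul_right, inner_sum,
          RCLike.real_smul_eq_coe_mul, RCLike.ofReal_inv, RCLike.ofReal_natCast]

theorem key_lemma_general {K : Type*} [MetricSpace K] [CompactSpace K]
    [MeasurableSpace K] [BorelSpace K] {n : ℕ} (hn : 1 ≤ n)
    (γ : Fin n → K → K) (hγ : ∀ i, ProperContraction (γ i))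
    (φ : K → K) (hφ : Continuous φ) (hbranch : ∀ (i : Fin n) (x : K), φ (γ i x) = x)
    (μ : Measure K) (hμ : IsHutchinsonMeasure γ μ)
    (Cφ : Lp ℂ 2 μ →L[ℂ] Lp ℂ 2 μ)
    (hCφ : ∀ f : Lp ℂ 2 μ, (Cφ f : K → ℂ) =ᵐ[μ] fun x => f (φ x))
    (M : C(K, ℂ) → (Lp ℂ 2 μ →L[ℂ] Lp ℂ 2 μ))
    (hM : ∀ (b : C(K, ℂ)) (f : Lp ℂ 2 μ), (M b f : K → ℂ) =ᵐ[μ] fun x => b x * f x)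
    (N : ℕ) (u : Fin N → C(K, ℂ)) (a : C(K, ℂ))
    (aL : Lp ℂ 2 μ) (haL : (aL : K → ℂ) =ᵐ[μ] a) :
    ((∑ i, M (u i) (Cφ ((ContinuousLinearMap.adjoint Cφ) (M (star (u i)) aL)))) : K → ℂ)
      =ᵐ[μ] fun x => ∑ i, u i x *
        ((n : ℂ)⁻¹ * ∑ j, (starRingEnd ℂ) (u i (γ j (φ x))) * a (γ j (φ x))) := by
  have : IsProbabilityMeasure μ := hμ.1
  have hn0 : n ≠ 0 := by omega
  let Γ : Fin n → C(K, K) := fun j => ⟨γ j, (hγ j).continuous⟩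
  have hφμ := hμ.measurePreserving_s10 hn0 hφ.measurable hbranch
  have hsummand : ∀ i, (Cφ (Cφ.adjoint (M (star (u i)) aL)) : K → ℂ)
      =ᵐ[μ] fun x => transferOperator Γ (star (u i) * a) (φ x) := by
    intro i
    have hMaL : M (star (u i)) aL = (star (u i) * a).toLp 2 μ ℂ := by
      refine Lp.ext ?_
      filter_upwards [hM (star (u i)) aL, haL, (star (u i) * a).coeFn_toLp (p := 2) (𝕜 := ℂ) μ]
        with x hMx hax hx
      rw [hMx, hax, hx, ContinuousMap.mul_apply]
    rw [hMaL, adjoint_toLp_eq_toLp_transferOperator (γ := Γ) hn0 hμ hbranch Cφ hCφ]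
    exact (hCφ _).trans (hφμ.quasiMeasurePreserving.ae_eq_comp (ContinuousMap.coeFn_toLp μ _))
  filter_upwards [ae_all_iff.2 fun i => hM (u i) (Cφ (Cφ.adjoint (M (star (u i)) aL))),
    ae_all_iff.2 hsummand] with x hMx hx
  rw [Finset.sum_apply]
  refine Finset.sum_congr rfl fun i _ => ?_
  rw [hMx i, hx i, transferOperator_apply]
  simp only [ContinuousMap.mul_apply, ContinuousMap.star_apply, Complex.star_def, Γ,
    ContinuousMap.coe_mk]

/-- Key lemma: for `u₁, …, u_N, a ∈ C(K)`,
`∑ᵢ M_{uᵢ} C_φ C_φ* M_{\overline{uᵢ}} a = ∑ᵢ uᵢ ⋅ ((L_φ(\overline{uᵢ} a)) ∘ φ)` in `L²(K, μ^H)`. -/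
theorem key_lemma {K : Type*} [MetricSpace K] [CompactSpace K] [Nonempty K]
    [MeasurableSpace K] [BorelSpace K] {n : ℕ} (hn : 1 ≤ n)
    (γ : Fin n → K → K) (hγ : ∀ i, ProperContraction (γ i))
    (φ : K → K) (hφ : Continuous φ) (hbranch : ∀ (i : Fin n) (x : K), φ (γ i x) = x)
    (hss : SelfSimilarSet γ) (hsep : MeasureSeparation γ)
    (μ : Measure K) (hμ : IsHutchinsonMeasure γ μ)
    (Cφ : Lp ℂ 2 μ →L[ℂ] Lp ℂ 2 μ)
    (hCφ : ∀ f : Lp ℂ 2 μ, (Cφ f : K → ℂ) =ᵐ[μ] fun x => f (φ x))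
    (M : C(K, ℂ) → (Lp ℂ 2 μ →L[ℂ] Lp ℂ 2 μ))
    (hM : ∀ (b : C(K, ℂ)) (f : Lp ℂ 2 μ), (M b f : K → ℂ) =ᵐ[μ] fun x => b x * f x)
    (N : ℕ) (u : Fin N → C(K, ℂ)) (a : C(K, ℂ))
    (aL : Lp ℂ 2 μ) (haL : (aL : K → ℂ) =ᵐ[μ] a) :
    ((∑ i, M (u i) (Cφ ((ContinuousLinearMap.adjoint Cφ) (M (star (u i)) aL)))) : K → ℂ)
      =ᵐ[μ] fun x => ∑ i, u i x *
        ((n : ℂ)⁻¹ * ∑ j, (starRingEnd ℂ) (u i (γ j (φ x))) * a (γ j (φ x))) :=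
  key_lemma_general hn γ hγ φ hφ hbranch μ hμ Cφ hCφ M hM N u a aL haL
end
end
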